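/- There exist k ∈ ℕ and contracting similarities h_1, …, h_k of the plane ℝ², each of the form h_i(x) = κ_i A_i x + b_i with κ_i ∈ (0,1), A_i a rotation matrix, and b_i ∈ ℝ², such that the linear part κ_i A_i of each h_i has no real eigenvalues, and such that the Hutchinson attractor Δ of the family (the unique nonempty compact set with Δ = h_1(Δ) ∪ … ∪ h_k(Δ)) has nonempty interior. -/

import Mathlib

/-!
Take the four maps `x ↦ ½ R x + c`, where `R` is the quarter turn and `c` runs over the corners
`(±½, ±½)`. In the sup norm of `Fin 2 → ℝ` the quarter turn is an isometry and `closedBall 0 1`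
is the square `[-1, 1]²`, so each map sends the square onto the quarter square
`closedBall c ½`, and the four quarter squares tile the square: the square is self-similar.
It is the only nonempty compact self-similar set because the Hutchinson operator
`s ↦ ⋃ i, f i '' s` contracts the Hausdorff distance by the common Lipschitz constant `½`.
-/

open Set Matrix Metric
open scoped NNReal ENNReal

section Attractor

variable {α β ι : Type*}

theorem LipschitzWith.infEDist_image_le [PseudoEMetricSpace α] [PseudoEMetricSpace β]
    {f : α → β} {K : ℝ≥0} (hf : LipschitzWith K f) (x : α) {t : Set α} (ht : t.Nonempty) :
    infEDist (f x) (f '' t) ≤ K * infEDist x t := by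
  rcases eq_or_ne K 0 with rfl | hK
  · obtain ⟨y, hy⟩ := ht
    simpa using (infEDist_le_edist_of_mem (mem_image_of_mem f hy)).trans (hf x y)
  · rw [mul_comm, ← ENNReal.div_le_iff_le_mul (by simp [hK]) (by simp)]
    refine le_infEDist.2 fun y hy => ENNReal.div_le_of_le_mul' ?_
    exact (infEDist_le_edist_of_mem (mem_image_of_mem f hy)).trans (hf x y)

theorem LipschitzWith.hausdorffEDist_image_le [PseudoEMetricSpace α] [PseudoEMetricSpace β]
    {f : α → β} {K : ℝ≥0} (hf : LipschitzWith K f) {s t : Set α} (hs : s.Nonempty)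
    (ht : t.Nonempty) : hausdorffEDist (f '' s) (f '' t) ≤ K * hausdorffEDist s t := by
  refine hausdorffEDist_le_of_infEDist ?_ ?_
  · rintro _ ⟨x, hx, rfl⟩
    exact (hf.infEDist_image_le x ht).trans (by gcongr; exact infEDist_le_hausdorffEDist_of_mem hx)
  · rintro _ ⟨x, hx, rfl⟩
    rw [hausdorffEDist_comm]
    exact (hf.infEDist_image_le x hs).trans (by gcongr; exact infEDist_le_hausdorffEDist_of_mem hx)

theorem hausdorffEDist_iUnion_image_le [PseudoEMetricSpace α] {f : ι → α → α} {K : ℝ≥0}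
    (hf : ∀ i, LipschitzWith K (f i)) {s t : Set α} (hs : s.Nonempty) (ht : t.Nonempty) :
    hausdorffEDist (⋃ i, f i '' s) (⋃ i, f i '' t) ≤ K * hausdorffEDist s t :=
  hausdorffEDist_iUnion_le.trans (iSup_le fun i => (hf i).hausdorffEDist_image_le hs ht)

theorem eq_of_eq_iUnion_image [MetricSpace α] {f : ι → α → α} {K : ℝ≥0} (hK : K < 1)
    (hf : ∀ i, LipschitzWith K (f i)) {s t : Set α} (hs : s.Nonempty) (hsc : IsCompact s)
    (hs_eq : s = ⋃ i, f i '' s) (ht : t.Nonempty) (htc : IsCompact t)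
    (ht_eq : t = ⋃ i, f i '' t) : s = t := by
  have hle : hausdorffEDist s t ≤ K * hausdorffEDist s t := by
    simpa only [← hs_eq, ← ht_eq] using hausdorffEDist_iUnion_image_le hf hs ht
  have hfin : hausdorffEDist s t ≠ ∞ :=
    hausdorffEDist_ne_top_of_nonempty_of_bounded hs ht hsc.isBounded htc.isBounded
  have hzero : hausdorffEDist s t = 0 := by
    by_contra hne
    refine hle.not_gt ?_
    calc (K : ℝ≥0∞) * hausdorffEDist s t < 1 * hausdorffEDist s t := by
          gcongr; exact_mod_cast hK
      _ = hausdorffEDist s t := one_mul _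
  exact (hsc.isClosed.hausdorffEDist_zero_iff htc.isClosed).1 hzero

end Attractor

section Cube

variable {ι : Type*}

noncomputable def corner (ε : ι → Bool) : ι → ℝ := fun j => if ε j then 1 / 2 else -(1 / 2)

theorem iUnion_closedBall_corner [Fintype ι] :
    ⋃ ε : ι → Bool, closedBall (corner ε) (1 / 2) = closedBall 0 1 := by
  refine Subset.antisymm (iUnion_subset fun ε => closedBall_subset_closedBall' ?_) fun y hy => ?_
  · have : ‖corner ε‖ ≤ 1 / 2 := by
      refine pi_norm_le_iff_of_nonneg (by norm_num) |>.2 fun j => ?_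
      unfold corner; split_ifs <;> norm_num
    rw [dist_zero_right]; linarith
  · refine mem_iUnion.2 ⟨fun j => decide (0 ≤ y j), (dist_pi_le_iff (by norm_num)).2 fun j => ?_⟩
    have hj : |y j| ≤ 1 := by
      simpa [Real.dist_eq] using (dist_le_pi_dist y 0 j).trans (mem_closedBall.1 hy)
    rw [abs_le] at hj
    rw [Real.dist_eq, abs_le]
    unfold corner
    by_cases h : 0 ≤ y j
    · simp only [h, decide_true, if_true]; constructor <;> linarith
    · simp only [h, decide_false, Bool.false_eq_true, if_false]; constructor <;> linarith

end Cube

section QuarterTurn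

def quarterTurn : Matrix (Fin 2) (Fin 2) ℝ := !![0, -1; 1, 0]

theorem quarterTurn_mulVec (v : Fin 2 → ℝ) : quarterTurn *ᵥ v = ![-v 1, v 0] := by
  ext j; fin_cases j <;> simp [quarterTurn, mulVec, dotProduct]

theorem quarterTurn_mulVec_quarterTurn_mulVec (v : Fin 2 → ℝ) :
    quarterTurn *ᵥ (quarterTurn *ᵥ v) = -v := by
  rw [quarterTurn_mulVec, quarterTurn_mulVec]
  ext j; fin_cases j <;> simp

theorem quarterTurn_mem_orthogonalGroup : quarterTurn ∈ orthogonalGroup (Fin 2) ℝ := by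
  rw [mem_orthogonalGroup_iff]
  ext i j; fin_cases i <;> fin_cases j <;> simp [quarterTurn, mul_apply, Fin.sum_univ_two]

theorem det_quarterTurn : quarterTurn.det = 1 := by
  simp [quarterTurn, det_fin_two_of]

theorem norm_quarterTurn_mulVec_le (v : Fin 2 → ℝ) : ‖quarterTurn *ᵥ v‖ ≤ ‖v‖ := by
  refine (pi_norm_le_iff_of_nonneg (norm_nonneg v)).2 fun j => ?_
  rw [quarterTurn_mulVec]
  fin_cases j
  · simpa using norm_le_pi_norm v 1
  · simpa using norm_le_pi_norm v 0

theorem norm_quarterTurn_mulVec (v : Fin 2 → ℝ) : ‖quarterTurn *ᵥ v‖ = ‖v‖ := by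
  refine (norm_quarterTurn_mulVec_le v).antisymm ?_
  calc ‖v‖ = ‖quarterTurn *ᵥ (quarterTurn *ᵥ v)‖ := by
        rw [quarterTurn_mulVec_quarterTurn_mulVec, norm_neg]
    _ ≤ ‖quarterTurn *ᵥ v‖ := norm_quarterTurn_mulVec_le _

theorem not_exists_eigenvector_smul_quarterTurn {c : ℝ} (hc : c ≠ 0) :
    ¬ ∃ (μ : ℝ) (v : Fin 2 → ℝ), v ≠ 0 ∧ (c • quarterTurn) *ᵥ v = μ • v := by
  rintro ⟨μ, v, hv, hμ⟩
  rw [smul_mulVec, quarterTurn_mulVec] at hμ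
  have h0 := congrFun hμ 0
  have h1 := congrFun hμ 1
  simp only [Pi.smul_apply, smul_eq_mul, cons_val_zero, cons_val_one, cons_val_fin_one] at h0 h1
  have hsq : c * (v 0 ^ 2 + v 1 ^ 2) = 0 := by linear_combination v 0 * h1 - v 1 * h0
  obtain ⟨h0', h1'⟩ := (add_eq_zero_iff_of_nonneg (sq_nonneg _) (sq_nonneg _)).1
    ((mul_eq_zero.1 hsq).resolve_left hc)
  exact hv (funext <| Fin.forall_fin_two.2 ⟨by simpa using h0', by simpa using h1'⟩)

theorem lipschitzWith_smul_quarterTurn_add (c : ℝ) (b : Fin 2 → ℝ) :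
    LipschitzWith ‖c‖₊ fun x => c • quarterTurn *ᵥ x + b :=
  LipschitzWith.of_dist_le_mul fun x y => by
    rw [dist_eq_norm, dist_eq_norm, add_sub_add_right_eq_sub, ← smul_sub, ← mulVec_sub,
      norm_smul, norm_quarterTurn_mulVec, coe_nnnorm]

theorem image_closedBall_smul_quarterTurn_add {c : ℝ} (hc : 0 < c) (b : Fin 2 → ℝ) (r : ℝ) :
    (fun x => c • quarterTurn *ᵥ x + b) '' closedBall 0 r = closedBall b (c * r) := by
  ext y
  constructor
  · rintro ⟨x, hx, rfl⟩
    rw [mem_closedBall_zero_iff] at hx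
    rw [mem_closedBall, dist_eq_norm, add_sub_cancel_right, norm_smul, norm_quarterTurn_mulVec,
      Real.norm_of_nonneg hc.le]
    gcongr
  · intro hy
    refine ⟨-c⁻¹ • quarterTurn *ᵥ (y - b), ?_, ?_⟩
    · rw [mem_closedBall_zero_iff, norm_smul, norm_neg, norm_inv, Real.norm_of_nonneg hc.le,
        norm_quarterTurn_mulVec, inv_mul_le_iff₀ hc, ← dist_eq_norm]
      exact hy
    · beta_reduce
      rw [mulVec_smul, quarterTurn_mulVec_quarterTurn_mulVec, smul_smul, mul_neg,
        mul_inv_cancel₀ hc.ne', neg_one_smul, neg_neg, sub_add_cancel]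

end QuarterTurn

theorem closedBall_eq_iUnion_image_corner :
    closedBall (0 : Fin 2 → ℝ) 1 =
      ⋃ ε : Fin 2 → Bool, (fun x => (1 / 2 : ℝ) • quarterTurn *ᵥ x + corner ε) '' closedBall 0 1 := by
  simp only [image_closedBall_smul_quarterTurn_add one_half_pos, mul_one, iUnion_closedBall_corner]

/-- there exist finitely many contracting similarities
`h i (x) = κ i • (A i).mulVec x + b i` of the plane (with `κ i ∈ (0,1)` and `A i` a rotation
matrix, so that the linear part `κ i • A i` has no real eigenvalues) whose Hutchinson
attractor — the unique nonempty compact set `Δ` with `Δ = ⋃ i, h i '' Δ` — has nonempty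
interior. -/
theorem stmt_10 :
    ∃ (k : ℕ), 0 < k ∧ ∃ (κ : Fin k → ℝ) (A : Fin k → Matrix (Fin 2) (Fin 2) ℝ)
      (b : Fin k → (Fin 2 → ℝ)),
      (∀ i, κ i ∈ Ioo (0 : ℝ) 1) ∧
      (∀ i, A i ∈ Matrix.orthogonalGroup (Fin 2) ℝ ∧ (A i).det = 1) ∧
      (∀ i, ¬ ∃ (c : ℝ) (v : Fin 2 → ℝ), v ≠ 0 ∧ (κ i • A i).mulVec v = c • v) ∧
      ∃ Δ : Set (Fin 2 → ℝ),
        (Δ.Nonempty ∧ IsCompact Δ ∧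
          Δ = ⋃ i, (fun x => κ i • (A i).mulVec x + b i) '' Δ) ∧
        (∀ Δ' : Set (Fin 2 → ℝ), Δ'.Nonempty → IsCompact Δ' →
          Δ' = ⋃ i, (fun x => κ i • (A i).mulVec x + b i) '' Δ' → Δ' = Δ) ∧
        (interior Δ).Nonempty := by
  let e := (Fintype.equivFin (Fin 2 → Bool)).symm
  have hΔ : closedBall (0 : Fin 2 → ℝ) 1 =
      ⋃ i, (fun x => (1 / 2 : ℝ) • quarterTurn *ᵥ x + corner (e i)) '' closedBall 0 1 := by
    rw [e.surjective.iUnion_comp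
      fun ε => (fun x => (1 / 2 : ℝ) • quarterTurn *ᵥ x + corner ε) '' closedBall 0 1]
    exact closedBall_eq_iUnion_image_corner
  have hK : ‖(1 / 2 : ℝ)‖₊ < 1 := by
    rw [← NNReal.coe_lt_coe, coe_nnnorm]; norm_num
  refine ⟨_, Fintype.card_pos, fun _ => 1 / 2, fun _ => quarterTurn, fun i => corner (e i),
    fun _ => ⟨by norm_num, by norm_num⟩, fun _ => ⟨quarterTurn_mem_orthogonalGroup, det_quarterTurn⟩,
    fun _ => not_exists_eigenvector_smul_quarterTurn (by norm_num), closedBall 0 1,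
    ⟨nonempty_closedBall.2 zero_le_one, isCompact_closedBall 0 1, hΔ⟩,
    fun Δ' hne hc hΔ' => ?_, ⟨0, ball_subset_interior_closedBall (mem_ball_self one_pos)⟩⟩
  exact eq_of_eq_iUnion_image hK (fun i => lipschitzWith_smul_quarterTurn_add _ _) hne hc hΔ'
    (nonempty_closedBall.2 zero_le_one) (isCompact_closedBall 0 1) hΔ
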